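/- arXiv:2509.18648 — 3 statements merged into one kernel-verified Lean document; each statement's English description precedes it below -/
import Mathlib

section
/- Under the setting of the telescoping lemma, suppose additionally that for every policy π the value V_c^{p,π} : S → ℝ is L_C-Lipschitz with respect to a metric d on S. Then for any transition kernel q, |C_q(π) − C_p(π)| ≤ (γ · L_C/(1−γ)) · E_{(s,a)∼d_{q,π}}[ D_W(q(·|s,a), p(·|s,a)) ], where D_W is the L1-Wasserstein distance with ground metric d. -/
open Finset

/-- State distribution at time `t` under kernel `p`, policy `π`, initial
distribution `ρ`. -/
def stDist {S A : Type} [Fintype S] [Fintype A]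
    (p : S → A → S → ℝ) (π : S → A → ℝ) (ρ : S → ℝ) : ℕ → S → ℝ
  | 0 => ρ
  | t + 1 => fun s' => ∑ s, ∑ a, stDist p π ρ t s * π s a * p s a s'

/-- Discounted value function for cost `c`, starting from state `s`. -/
noncomputable def Vval {S A : Type} [Fintype S] [Fintype A] [DecidableEq S]
    (γ : ℝ) (p : S → A → S → ℝ) (π : S → A → ℝ) (c : S → A → ℝ) (s : S) : ℝ :=
  ∑' t : ℕ, γ ^ t *
    ∑ s', stDist p π (fun x => if x = s then (1 : ℝ) else 0) t s' *
      ∑ a, π s' a * c s' a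

/-- Expected discounted cumulative cost from initial distribution `ρ`. -/
noncomputable def Cval {S A : Type} [Fintype S] [Fintype A] [DecidableEq S]
    (γ : ℝ) (p : S → A → S → ℝ) (π : S → A → ℝ) (c : S → A → ℝ) (ρ : S → ℝ) : ℝ :=
  ∑ s, ρ s * Vval γ p π c s

/-- Normalized discounted state-action occupancy measure. -/
noncomputable def occ {S A : Type} [Fintype S] [Fintype A]
    (γ : ℝ) (p : S → A → S → ℝ) (π : S → A → ℝ) (ρ : S → ℝ) (s : S) (a : A) : ℝ :=
  (1 - γ) * π s a * ∑' t : ℕ, γ ^ t * stDist p π ρ t s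

/-- L1-Wasserstein distance between pmfs on a finite space, with ground
distance `d`. -/
noncomputable def DW {S : Type} [Fintype S] (d : S → S → ℝ) (μ ν : S → ℝ) : ℝ :=
  sInf {w : ℝ | ∃ κ : S → S → ℝ, (∀ x y, 0 ≤ κ x y) ∧
    (∀ x, ∑ y, κ x y = μ x) ∧ (∀ y, ∑ x, κ x y = ν y) ∧
    w = ∑ x, ∑ y, κ x y * d x y}

/-!
Following `π`, the kernels `p` and `q` induce row-stochastic transition matrices `P` and `Q`.
The value function is the resolvent `V_p = (1 - γP)⁻¹ r` applied to the expected one-step cost `r`,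
and `w = ρᵀ (1 - γQ)⁻¹` is the unnormalized discounted state occupancy under `q`. The telescoping
lemma is then the resolvent identity `(1 - γQ)⁻¹ - (1 - γP)⁻¹ = γ (1 - γQ)⁻¹ (Q - P) (1 - γP)⁻¹`:
`C_q - C_p = γ ∑_{s,a} w(s) π(a|s) (E_{q(·|s,a)} V_p - E_{p(·|s,a)} V_p)`. Each inner difference
equals `∑ κ(x,y) (V_p x - V_p y)` for every coupling `κ` of `q(·|s,a)` and `p(·|s,a)`, so it is
at most `L` times the transport cost of `κ`, hence at most `L · D_W`.
-/

open Matrix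

section HasSum

variable {X m n R : Type*} [NonUnitalNonAssocSemiring R] [TopologicalSpace R]
  [IsTopologicalSemiring R] {f : X → Matrix m n R} {M : Matrix m n R}

theorem HasSum.matrix_mulVec [Fintype n] (hf : HasSum f M) (v : n → R) :
    HasSum (fun x => f x *ᵥ v) (M *ᵥ v) :=
  hf.map (mulVec.addMonoidHomLeft v) (continuous_id.matrix_mulVec continuous_const)

theorem HasSum.matrix_vecMul [Fintype m] (hf : HasSum f M) (v : m → R) :
    HasSum (fun x => v ᵥ* f x) (v ᵥ* M) :=
  let φ : Matrix m n R →+ (n → R) :=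
    { toFun := (v ᵥ* ·), map_zero' := vecMul_zero v, map_add' := fun A B => vecMul_add A B v }
  hf.map φ (continuous_const.matrix_vecMul continuous_id)

end HasSum

section Resolvent

variable {S : Type*} [Fintype S] [DecidableEq S] {γ : ℝ} {P : Matrix S S ℝ}

theorem summable_pow_smul_of_mem_rowStochastic (hP : P ∈ rowStochastic ℝ S) (hγ0 : 0 ≤ γ)
    (hγ1 : γ < 1) : Summable ((γ • P) ^ ·) := by
  refine Pi.summable.2 fun i => Pi.summable.2 fun j => ?_
  refine (summable_geometric_of_lt_one hγ0 hγ1).of_nonneg_of_le (fun t => ?_) (fun t => ?_)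
  all_goals simp only [smul_pow, Matrix.smul_apply, smul_eq_mul]
  · exact mul_nonneg (pow_nonneg hγ0 t) (nonneg_of_mem_rowStochastic (pow_mem hP t))
  · exact mul_le_of_le_one_right (pow_nonneg hγ0 t) (le_one_of_mem_rowStochastic (pow_mem hP t))

theorem hasSum_pow_inv_one_sub_smul (hP : P ∈ rowStochastic ℝ S) (hγ0 : 0 ≤ γ) (hγ1 : γ < 1) :
    HasSum ((γ • P) ^ ·) (1 - γ • P)⁻¹ := by
  have h := summable_pow_smul_of_mem_rowStochastic hP hγ0 hγ1
  rw [inv_eq_left_inv h.tsum_pow_mul_one_sub]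
  exact h.hasSum

theorem isUnit_one_sub_smul (hP : P ∈ rowStochastic ℝ S) (hγ0 : 0 ≤ γ) (hγ1 : γ < 1) :
    IsUnit (1 - γ • P) :=
  (isUnit_iff_isUnit_det _).2 <| isUnit_det_of_left_inverse
    (summable_pow_smul_of_mem_rowStochastic hP hγ0 hγ1).tsum_pow_mul_one_sub

theorem vecMul_inv_one_sub_smul_nonneg (hP : P ∈ rowStochastic ℝ S) (hγ0 : 0 ≤ γ) (hγ1 : γ < 1)
    {ρ : S → ℝ} (hρ0 : ∀ s, 0 ≤ ρ s) (s : S) : 0 ≤ (ρ ᵥ* (1 - γ • P)⁻¹) s := by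
  refine (Pi.hasSum.1 ((hasSum_pow_inv_one_sub_smul hP hγ0 hγ1).matrix_vecMul ρ) s).nonneg
    fun t => ?_
  rw [smul_pow, vecMul_smul, Pi.smul_apply, smul_eq_mul]
  exact mul_nonneg (pow_nonneg hγ0 t) (nonneg_vecMul_of_mem_rowStochastic (pow_mem hP t) hρ0 s)

end Resolvent

section Wasserstein

variable {S : Type} [Fintype S] {d : S → S → ℝ} {μ ν V : S → ℝ} {L : ℝ}

theorem abs_dotProduct_sub_le_of_coupling {κ : S → S → ℝ} (hκ0 : ∀ x y, 0 ≤ κ x y)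
    (hκμ : ∀ x, ∑ y, κ x y = μ x) (hκν : ∀ y, ∑ x, κ x y = ν y)
    (hV : ∀ x y, |V x - V y| ≤ L * d x y) :
    |μ ⬝ᵥ V - ν ⬝ᵥ V| ≤ L * ∑ x, ∑ y, κ x y * d x y := by
  have hsplit : μ ⬝ᵥ V - ν ⬝ᵥ V = ∑ x, ∑ y, κ x y * (V x - V y) := by
    simp only [dotProduct, ← hκμ, ← hκν, sum_mul, mul_sub, sum_sub_distrib]
    rw [sum_comm (f := fun y x => κ x y * V y)]
  rw [hsplit, mul_sum]
  refine (abs_sum_le_sum_abs _ _).trans (sum_le_sum fun x _ => ?_)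
  rw [mul_sum]
  refine (abs_sum_le_sum_abs _ _).trans (sum_le_sum fun y _ => ?_)
  rw [abs_mul, abs_of_nonneg (hκ0 x y), mul_left_comm]
  exact mul_le_mul_of_nonneg_left (hV x y) (hκ0 x y)

theorem abs_dotProduct_sub_le_mul_DW (hd : ∀ x y, 0 ≤ d x y)
    (hμ0 : ∀ x, 0 ≤ μ x) (hμ1 : ∑ x, μ x = 1) (hν0 : ∀ x, 0 ≤ ν x) (hν1 : ∑ x, ν x = 1)
    (hV : ∀ x y, |V x - V y| ≤ L * d x y) :
    |μ ⬝ᵥ V - ν ⬝ᵥ V| ≤ L * DW d μ ν := by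
  set couplingCosts := {w : ℝ | ∃ κ : S → S → ℝ, (∀ x y, 0 ≤ κ x y) ∧
    (∀ x, ∑ y, κ x y = μ x) ∧ (∀ y, ∑ x, κ x y = ν y) ∧ w = ∑ x, ∑ y, κ x y * d x y}
  have hprod : ∑ x, ∑ y, μ x * ν y * d x y ∈ couplingCosts :=
    ⟨fun x y => μ x * ν y, fun x y => mul_nonneg (hμ0 x) (hν0 y),
      fun x => by rw [← mul_sum, hν1, mul_one], fun y => by rw [← sum_mul, hμ1, one_mul], rfl⟩
  have hle : ∀ w ∈ couplingCosts, |μ ⬝ᵥ V - ν ⬝ᵥ V| ≤ L * w := by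
    rintro _ ⟨κ, hκ0, hκμ, hκν, rfl⟩
    exact abs_dotProduct_sub_le_of_coupling hκ0 hκμ hκν hV
  rcases le_total 0 L with hL | hL
  · rw [DW, ← smul_eq_mul, ← Real.sInf_smul_of_nonneg hL]
    refine le_csInf (Set.smul_set_nonempty.2 ⟨_, hprod⟩) ?_
    rintro _ ⟨w, hw, rfl⟩
    exact hle w hw
  · have hbdd : BddBelow couplingCosts := ⟨0, by
      rintro _ ⟨κ, hκ0, -, -, rfl⟩
      exact sum_nonneg fun x _ => sum_nonneg fun y _ => mul_nonneg (hκ0 x y) (hd x y)⟩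
    exact (hle _ hprod).trans (mul_le_mul_of_nonpos_left (csInf_le hbdd hprod) hL)

end Wasserstein

section MDP

variable {S A : Type} [Fintype S] [Fintype A]

def transitionMatrix (p : S → A → S → ℝ) (π : S → A → ℝ) : Matrix S S ℝ :=
  of fun s s' => ∑ a, π s a * p s a s'

theorem transitionMatrix_mulVec (p : S → A → S → ℝ) (π : S → A → ℝ) (f : S → ℝ) (s : S) :
    (transitionMatrix p π *ᵥ f) s = ∑ a, π s a * (p s a ⬝ᵥ f) := by
  simp only [mulVec, dotProduct, transitionMatrix, of_apply, sum_mul, mul_sum, mul_assoc]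
  exact sum_comm

theorem abs_transitionMatrix_sub_mulVec_le {p q : S → A → S → ℝ} {π : S → A → ℝ}
    (hπ0 : ∀ s a, 0 ≤ π s a) (f : S → ℝ) (s : S) :
    |((transitionMatrix q π - transitionMatrix p π) *ᵥ f) s| ≤
      ∑ a, π s a * |q s a ⬝ᵥ f - p s a ⬝ᵥ f| := by
  rw [sub_mulVec, Pi.sub_apply, transitionMatrix_mulVec, transitionMatrix_mulVec,
    ← sum_sub_distrib]
  refine (abs_sum_le_sum_abs _ _).trans_eq (sum_congr rfl fun a _ => ?_)
  rw [← mul_sub, abs_mul, abs_of_nonneg (hπ0 s a)]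

variable [DecidableEq S]

theorem transitionMatrix_mem_rowStochastic {p : S → A → S → ℝ}
    {π : S → A → ℝ} (hp0 : ∀ s a s', 0 ≤ p s a s') (hp1 : ∀ s a, ∑ s', p s a s' = 1)
    (hπ0 : ∀ s a, 0 ≤ π s a) (hπ1 : ∀ s, ∑ a, π s a = 1) :
    transitionMatrix p π ∈ rowStochastic ℝ S := by
  refine mem_rowStochastic.2
    ⟨fun s s' => sum_nonneg fun a _ => mul_nonneg (hπ0 s a) (hp0 s a s'), ?_⟩
  ext s
  simp [transitionMatrix_mulVec, dotProduct, hp1, hπ1]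

theorem stDist_eq_vecMul (p : S → A → S → ℝ) (π : S → A → ℝ) (μ : S → ℝ) (t : ℕ) :
    stDist p π μ t = μ ᵥ* transitionMatrix p π ^ t := by
  induction t with
  | zero => simp [stDist]
  | succ t ih =>
    rw [pow_succ, ← vecMul_vecMul, ← ih]
    ext s'
    simp only [stDist, vecMul, dotProduct, transitionMatrix, of_apply, mul_sum, mul_assoc]

variable {γ : ℝ} {p q : S → A → S → ℝ} {π : S → A → ℝ}

theorem Vval_eq_inv_mulVec (hP : transitionMatrix p π ∈ rowStochastic ℝ S) (hγ0 : 0 ≤ γ)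
    (hγ1 : γ < 1) (c : S → A → ℝ) :
    Vval γ p π c = (1 - γ • transitionMatrix p π)⁻¹ *ᵥ fun s => ∑ a, π s a * c s a := by
  ext s
  have h := Pi.hasSum.1 ((hasSum_pow_inv_one_sub_smul hP hγ0 hγ1).matrix_mulVec
    fun s => ∑ a, π s a * c s a) s
  refine Eq.trans (tsum_congr fun t => ?_) h.tsum_eq
  rw [stDist_eq_vecMul, smul_pow, smul_mulVec, Pi.smul_apply, smul_eq_mul, ← dotProduct,
    ← dotProduct_mulVec]
  simp [dotProduct]

theorem occ_eq_vecMul_inv (hP : transitionMatrix p π ∈ rowStochastic ℝ S) (hγ0 : 0 ≤ γ)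
    (hγ1 : γ < 1) (ρ : S → ℝ) (s : S) (a : A) :
    occ γ p π ρ s a = (1 - γ) * π s a * (ρ ᵥ* (1 - γ • transitionMatrix p π)⁻¹) s := by
  have h := Pi.hasSum.1 ((hasSum_pow_inv_one_sub_smul hP hγ0 hγ1).matrix_vecMul ρ) s
  rw [occ, ← h.tsum_eq]
  congr 1
  refine tsum_congr fun t => ?_
  rw [stDist_eq_vecMul, smul_pow, vecMul_smul, Pi.smul_apply, smul_eq_mul]

theorem Cval_sub_Cval (hP : transitionMatrix p π ∈ rowStochastic ℝ S)
    (hQ : transitionMatrix q π ∈ rowStochastic ℝ S) (hγ0 : 0 ≤ γ) (hγ1 : γ < 1)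
    (c : S → A → ℝ) (ρ : S → ℝ) :
    Cval γ q π c ρ - Cval γ p π c ρ = γ * ((ρ ᵥ* (1 - γ • transitionMatrix q π)⁻¹) ⬝ᵥ
      ((transitionMatrix q π - transitionMatrix p π) *ᵥ Vval γ p π c)) := by
  set P := transitionMatrix p π
  set Q := transitionMatrix q π
  have hresolvent : (1 - γ • Q)⁻¹ - (1 - γ • P)⁻¹ =
      γ • ((1 - γ • Q)⁻¹ * (Q - P) * (1 - γ • P)⁻¹) := by
    rw [inv_sub_inv (iff_of_true (isUnit_one_sub_smul hQ hγ0 hγ1)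
      (isUnit_one_sub_smul hP hγ0 hγ1)), show (1 - γ • P) - (1 - γ • Q) = γ • (Q - P) by
      rw [smul_sub]; abel, Matrix.mul_smul, Matrix.smul_mul]
  change ρ ⬝ᵥ Vval γ q π c - ρ ⬝ᵥ Vval γ p π c = _
  rw [Vval_eq_inv_mulVec hQ hγ0 hγ1, Vval_eq_inv_mulVec hP hγ0 hγ1, ← dotProduct_sub,
    ← sub_mulVec, hresolvent, smul_mulVec, dotProduct_smul, smul_eq_mul, ← mulVec_mulVec,
    ← mulVec_mulVec, dotProduct_mulVec]

end MDP

theorem cost_gap_le_wasserstein_general {S A : Type} [Fintype S] [Fintype A]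
    [DecidableEq S] [MetricSpace S]
    (γ : ℝ) (hγ0 : 0 ≤ γ) (hγ1 : γ < 1)
    (p q : S → A → S → ℝ) (π : S → A → ℝ) (ρ : S → ℝ)
    (c : S → A → ℝ) (L : ℝ)
    (hp0 : ∀ s a s', 0 ≤ p s a s') (hp1 : ∀ s a, ∑ s', p s a s' = 1)
    (hq0 : ∀ s a s', 0 ≤ q s a s') (hq1 : ∀ s a, ∑ s', q s a s' = 1)
    (hπ0 : ∀ s a, 0 ≤ π s a) (hπ1 : ∀ s, ∑ a, π s a = 1)
    (hρ0 : ∀ s, 0 ≤ ρ s)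
    (hLip : ∀ π' : S → A → ℝ, (∀ s a, 0 ≤ π' s a) → (∀ s, ∑ a, π' s a = 1) →
      ∀ s s' : S, |Vval γ p π' c s - Vval γ p π' c s'| ≤ L * dist s s') :
    |Cval γ q π c ρ - Cval γ p π c ρ| ≤
      γ * L / (1 - γ) * ∑ s, ∑ a, occ γ q π ρ s a *
        DW dist (q s a) (p s a) := by
  have hP := transitionMatrix_mem_rowStochastic hp0 hp1 hπ0 hπ1
  have hQ := transitionMatrix_mem_rowStochastic hq0 hq1 hπ0 hπ1
  set w := ρ ᵥ* (1 - γ • transitionMatrix q π)⁻¹ with hw_def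
  set V := Vval γ p π c
  have hw : ∀ s, 0 ≤ w s := vecMul_inv_one_sub_smul_nonneg hQ hγ0 hγ1 hρ0
  have hKR : ∀ s a, |q s a ⬝ᵥ V - p s a ⬝ᵥ V| ≤ L * DW dist (q s a) (p s a) := fun s a =>
    abs_dotProduct_sub_le_mul_DW (fun _ _ => dist_nonneg) (hq0 s a) (hq1 s a) (hp0 s a)
      (hp1 s a) (hLip π hπ0 hπ1)
  rw [Cval_sub_Cval hP hQ hγ0 hγ1, abs_mul, abs_of_nonneg hγ0]
  calc γ * |w ⬝ᵥ ((transitionMatrix q π - transitionMatrix p π) *ᵥ V)|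
      ≤ γ * ∑ s, w s * ∑ a, π s a * (L * DW dist (q s a) (p s a)) := by
        gcongr
        refine (abs_sum_le_sum_abs _ _).trans (sum_le_sum fun s _ => ?_)
        rw [abs_mul, abs_of_nonneg (hw s)]
        refine mul_le_mul_of_nonneg_left ?_ (hw s)
        refine (abs_transitionMatrix_sub_mulVec_le hπ0 V s).trans (sum_le_sum fun a _ => ?_)
        exact mul_le_mul_of_nonneg_left (hKR s a) (hπ0 s a)
    _ = γ * L / (1 - γ) * ∑ s, ∑ a, occ γ q π ρ s a * DW dist (q s a) (p s a) := by
        have h1γ : 1 - γ ≠ 0 := by linarith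
        simp only [occ_eq_vecMul_inv hQ hγ0 hγ1, ← hw_def, mul_sum]
        refine sum_congr rfl fun s _ => sum_congr rfl fun a _ => ?_
        field_simp

/-- Telescoping lemma combined with Kantorovich–Rubinstein duality: if the
value function under `p` is `L_C`-Lipschitz for every policy, then the cost gap
is bounded by the occupancy-weighted Wasserstein distance between kernels. -/
theorem cost_gap_le_wasserstein {S A : Type} [Fintype S] [Fintype A]
    [DecidableEq S] [MetricSpace S]
    (γ : ℝ) (hγ0 : 0 ≤ γ) (hγ1 : γ < 1)
    (p q : S → A → S → ℝ) (π : S → A → ℝ) (ρ : S → ℝ)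
    (c : S → A → ℝ) (cmax : ℝ) (L : ℝ)
    (hp0 : ∀ s a s', 0 ≤ p s a s') (hp1 : ∀ s a, ∑ s', p s a s' = 1)
    (hq0 : ∀ s a s', 0 ≤ q s a s') (hq1 : ∀ s a, ∑ s', q s a s' = 1)
    (hπ0 : ∀ s a, 0 ≤ π s a) (hπ1 : ∀ s, ∑ a, π s a = 1)
    (hρ0 : ∀ s, 0 ≤ ρ s) (hρ1 : ∑ s, ρ s = 1)
    (hc0 : ∀ s a, 0 ≤ c s a) (hc1 : ∀ s a, c s a ≤ cmax)
    (hLip : ∀ π' : S → A → ℝ, (∀ s a, 0 ≤ π' s a) → (∀ s, ∑ a, π' s a = 1) →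
      ∀ s s' : S, |Vval γ p π' c s - Vval γ p π' c s'| ≤ L * dist s s') :
    |Cval γ q π c ρ - Cval γ p π c ρ| ≤
      γ * L / (1 - γ) * ∑ s, ∑ a, occ γ q π ρ s a *
        DW dist (q s a) (p s a) :=
  cost_gap_le_wasserstein_general γ hγ0 hγ1 p q π ρ c L hp0 hp1 hq0 hq1 hπ0 hπ1 hρ0 hLip
end

section
/- Let p* be a transition kernel and {p_ξ}_{ξ∈Ξ} a family of kernels with a distribution μ on Ξ. Assume for every π the value V_c^{p*,π} is L_C-Lipschitz. Then for every policy π, C_{p*}(π) ≤ E_{ξ∼μ}[C_{p_ξ}(π)] + E_{ξ∼μ}[ E_{(s,a)∼d_{p_ξ,π}}[ (γ L_C/(1−γ)) · D_W(p_ξ(·|s,a), p*(·|s,a)) ] ]. -/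
open Finset

set_option linter.unusedSectionVars false
set_option linter.unusedVariables false
set_option maxHeartbeats 1000000

section aux
variable {S A : Type} [Fintype S] [Fintype A] [DecidableEq S]
variable {p : S → A → S → ℝ} {π : S → A → ℝ} {ρ : S → ℝ}

lemma abs_pmf_dot {ι : Type} [Fintype ι] (w f : ι → ℝ) (hw0 : ∀ i, 0 ≤ w i)
    (hw1 : ∑ i, w i = 1) {M : ℝ} (hf : ∀ i, |f i| ≤ M) :
    |∑ i, w i * f i| ≤ M := by
  calc |∑ i, w i * f i| ≤ ∑ i, |w i * f i| := Finset.abs_sum_le_sum_abs _ _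
    _ ≤ ∑ i, w i * M := by
        apply Finset.sum_le_sum
        intro i _
        rw [abs_mul, abs_of_nonneg (hw0 i)]
        exact mul_le_mul_of_nonneg_left (hf i) (hw0 i)
    _ = M := by rw [← Finset.sum_mul, hw1, one_mul]

lemma stDist_nonneg (hp0 : ∀ s a s', 0 ≤ p s a s') (hπ0 : ∀ s a, 0 ≤ π s a)
    (hρ0 : ∀ s, 0 ≤ ρ s) : ∀ t s, 0 ≤ stDist p π ρ t s := by
  intro t
  induction t with
  | zero => exact hρ0
  | succ t ih =>
    intro s'
    apply Finset.sum_nonneg; intro s _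
    apply Finset.sum_nonneg; intro a _
    exact mul_nonneg (mul_nonneg (ih s) (hπ0 s a)) (hp0 s a s')

lemma stDist_sum_one (hp1 : ∀ s a, ∑ s', p s a s' = 1) (hπ1 : ∀ s, ∑ a, π s a = 1)
    (hρ1 : ∑ s, ρ s = 1) : ∀ t, ∑ s, stDist p π ρ t s = 1 := by
  intro t
  induction t with
  | zero => exact hρ1
  | succ t ih =>
    show ∑ s', ∑ s, ∑ a, stDist p π ρ t s * π s a * p s a s' = 1
    rw [Finset.sum_comm]
    calc ∑ s, ∑ s', ∑ a, stDist p π ρ t s * π s a * p s a s'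
        = ∑ s, ∑ a, ∑ s', stDist p π ρ t s * π s a * p s a s' := by
          refine Finset.sum_congr rfl fun s _ => Finset.sum_comm
      _ = ∑ s, ∑ a, stDist p π ρ t s * π s a := by
          refine Finset.sum_congr rfl fun s _ => Finset.sum_congr rfl fun a _ => ?_
          rw [← Finset.mul_sum, hp1, mul_one]
      _ = ∑ s, stDist p π ρ t s := by
          refine Finset.sum_congr rfl fun s _ => ?_
          rw [← Finset.mul_sum, hπ1, mul_one]
      _ = 1 := ih

lemma stDist_linear (t : ℕ) (s' : S) :
    stDist p π ρ t s' = ∑ s₀, ρ s₀ * stDist p π (fun x => if x = s₀ then (1:ℝ) else 0) t s' := by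
  induction t generalizing s' with
  | zero =>
    show ρ s' = _
    simp [stDist]
  | succ t ih =>
    show ∑ s, ∑ a, stDist p π ρ t s * π s a * p s a s' = _
    have key : ∀ s₀, ρ s₀ * stDist p π (fun x => if x = s₀ then (1:ℝ) else 0) (t+1) s'
        = ∑ s, ∑ a, (ρ s₀ * stDist p π (fun x => if x = s₀ then (1:ℝ) else 0) t s) * π s a * p s a s' := by
      intro s₀
      show ρ s₀ * ∑ s, ∑ a, _ = _
      rw [Finset.mul_sum]
      refine Finset.sum_congr rfl fun s _ => ?_
      rw [Finset.mul_sum]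
      refine Finset.sum_congr rfl fun a _ => ?_
      ring
    have step : ∑ s₀, ρ s₀ * stDist p π (fun x => if x = s₀ then (1:ℝ) else 0) (t+1) s'
        = ∑ s₀, ∑ s, ∑ a, (ρ s₀ * stDist p π (fun x => if x = s₀ then (1:ℝ) else 0) t s) * π s a * p s a s' :=
      Finset.sum_congr rfl fun s₀ _ => key s₀
    rw [step]
    calc ∑ s, ∑ a, stDist p π ρ t s * π s a * p s a s'
        = ∑ s, ∑ a, ∑ s₀, (ρ s₀ * stDist p π (fun x => if x = s₀ then (1:ℝ) else 0) t s) * π s a * p s a s' := by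
          refine Finset.sum_congr rfl fun s _ => Finset.sum_congr rfl fun a _ => ?_
          rw [ih s, Finset.sum_mul, Finset.sum_mul]
      _ = ∑ s, ∑ s₀, ∑ a, (ρ s₀ * stDist p π (fun x => if x = s₀ then (1:ℝ) else 0) t s) * π s a * p s a s' :=
          Finset.sum_congr rfl fun s _ => Finset.sum_comm
      _ = ∑ s₀, ∑ s, ∑ a, (ρ s₀ * stDist p π (fun x => if x = s₀ then (1:ℝ) else 0) t s) * π s a * p s a s' :=
          Finset.sum_comm

lemma stDist_shift (t : ℕ) :
    stDist p π ρ (t + 1) = stDist p π (fun s' => ∑ s, ∑ a, ρ s * π s a * p s a s') t := by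
  induction t with
  | zero => rfl
  | succ t ih =>
    funext s'
    show ∑ s, ∑ a, stDist p π ρ (t+1) s * π s a * p s a s' = _
    rw [ih]
    rfl

lemma summable_geom_mul {γ : ℝ} (hγ0 : 0 ≤ γ) (hγ1 : γ < 1) (g : ℕ → ℝ) (M : ℝ)
    (hM : ∀ t, |g t| ≤ M) : Summable (fun t => γ ^ t * g t) := by
  apply Summable.of_abs
  apply Summable.of_nonneg_of_le (fun t => abs_nonneg _) (fun t => ?_)
    ((summable_geometric_of_lt_one hγ0 hγ1).mul_left M)
  rw [abs_mul, abs_pow, abs_of_nonneg hγ0]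
  calc γ ^ t * |g t| ≤ γ ^ t * M := mul_le_mul_of_nonneg_left (hM t) (pow_nonneg hγ0 t)
    _ = M * γ ^ t := mul_comm _ _

end aux

section aux2
variable {S A : Type} [Fintype S] [Fintype A] [DecidableEq S]
variable {p : S → A → S → ℝ} {π : S → A → ℝ} {ρ : S → ℝ}

lemma delta_nonneg (s x : S) : (0:ℝ) ≤ if x = s then (1:ℝ) else 0 := by positivity

lemma delta_sum_one (s : S) : ∑ x, (if x = s then (1:ℝ) else 0) = 1 := by
  simp

lemma summable_dot {γ : ℝ} (hγ0 : 0 ≤ γ) (hγ1 : γ < 1)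
    (hp0 : ∀ s a s', 0 ≤ p s a s') (hp1 : ∀ s a, ∑ s', p s a s' = 1)
    (hπ0 : ∀ s a, 0 ≤ π s a) (hπ1 : ∀ s, ∑ a, π s a = 1)
    (hρ0 : ∀ s, 0 ≤ ρ s) (hρ1 : ∑ s, ρ s = 1)
    (r : S → ℝ) (M : ℝ) (hr : ∀ s, |r s| ≤ M) :
    Summable (fun t => γ ^ t * ∑ s', stDist p π ρ t s' * r s') :=
  summable_geom_mul hγ0 hγ1 _ M (fun t =>
    abs_pmf_dot _ _ (stDist_nonneg hp0 hπ0 hρ0 t) (stDist_sum_one hp1 hπ1 hρ1 t) hr)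

lemma Cval_eq {γ : ℝ} (hγ0 : 0 ≤ γ) (hγ1 : γ < 1)
    (hp0 : ∀ s a s', 0 ≤ p s a s') (hp1 : ∀ s a, ∑ s', p s a s' = 1)
    (hπ0 : ∀ s a, 0 ≤ π s a) (hπ1 : ∀ s, ∑ a, π s a = 1)
    (hρ0 : ∀ s, 0 ≤ ρ s) (hρ1 : ∑ s, ρ s = 1)
    (c : S → A → ℝ) (cmax : ℝ) (hc : ∀ s a, |c s a| ≤ cmax) :
    Cval γ p π c ρ
      = ∑' t : ℕ, γ ^ t * ∑ s', stDist p π ρ t s' * ∑ a, π s' a * c s' a := by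
  have hr : ∀ s', |∑ a, π s' a * c s' a| ≤ cmax := fun s' =>
    abs_pmf_dot _ _ (hπ0 s') (hπ1 s') (hc s')
  have hsum : ∀ s : S, Summable (fun t => ρ s * (γ ^ t *
      ∑ s', stDist p π (fun x => if x = s then (1:ℝ) else 0) t s' * ∑ a, π s' a * c s' a)) := by
    intro s
    exact (summable_dot hγ0 hγ1 hp0 hp1 hπ0 hπ1 (delta_nonneg s) (delta_sum_one s)
      _ cmax hr).mul_left _
  calc Cval γ p π c ρ
      = ∑ s, ∑' t : ℕ, ρ s * (γ ^ t *
          ∑ s', stDist p π (fun x => if x = s then (1:ℝ) else 0) t s' * ∑ a, π s' a * c s' a) := by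
        unfold Cval Vval
        exact Finset.sum_congr rfl fun s _ => (tsum_mul_left).symm
    _ = ∑' t : ℕ, ∑ s, ρ s * (γ ^ t *
          ∑ s', stDist p π (fun x => if x = s then (1:ℝ) else 0) t s' * ∑ a, π s' a * c s' a) :=
        (Summable.tsum_finsetSum fun s _ => hsum s).symm
    _ = ∑' t : ℕ, γ ^ t * ∑ s', stDist p π ρ t s' * ∑ a, π s' a * c s' a := by
        refine tsum_congr fun t => ?_
        calc ∑ s, ρ s * (γ ^ t *
              ∑ s', stDist p π (fun x => if x = s then (1:ℝ) else 0) t s' * ∑ a, π s' a * c s' a)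
            = γ ^ t * ∑ s, ∑ s', ρ s * stDist p π (fun x => if x = s then (1:ℝ) else 0) t s'
                * ∑ a, π s' a * c s' a := by
              rw [Finset.mul_sum]
              refine Finset.sum_congr rfl fun s _ => ?_
              rw [Finset.mul_sum, Finset.mul_sum, Finset.mul_sum]
              refine Finset.sum_congr rfl fun s' _ => by ring
          _ = γ ^ t * ∑ s', ∑ s, ρ s * stDist p π (fun x => if x = s then (1:ℝ) else 0) t s'
                * ∑ a, π s' a * c s' a := by rw [Finset.sum_comm]
          _ = γ ^ t * ∑ s', stDist p π ρ t s' * ∑ a, π s' a * c s' a := by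
              congr 1
              refine Finset.sum_congr rfl fun s' _ => ?_
              rw [← Finset.sum_mul, ← stDist_linear]
end aux2

section aux3
variable {S A : Type} [Fintype S] [Fintype A] [DecidableEq S]
variable {p : S → A → S → ℝ} {π : S → A → ℝ}

lemma abs_Vval_le {γ : ℝ} (hγ0 : 0 ≤ γ) (hγ1 : γ < 1)
    (hp0 : ∀ s a s', 0 ≤ p s a s') (hp1 : ∀ s a, ∑ s', p s a s' = 1)
    (hπ0 : ∀ s a, 0 ≤ π s a) (hπ1 : ∀ s, ∑ a, π s a = 1)
    (c : S → A → ℝ) (cmax : ℝ) (hc : ∀ s a, |c s a| ≤ cmax) (s : S) :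
    |Vval γ p π c s| ≤ cmax / (1 - γ) := by
  have hr : ∀ s', |∑ a, π s' a * c s' a| ≤ cmax := fun s' =>
    abs_pmf_dot _ _ (hπ0 s') (hπ1 s') (hc s')
  have hsum : Summable (fun t => γ ^ t *
      ∑ s', stDist p π (fun x => if x = s then (1:ℝ) else 0) t s' * ∑ a, π s' a * c s' a) :=
    summable_dot hγ0 hγ1 hp0 hp1 hπ0 hπ1 (delta_nonneg s) (delta_sum_one s) _ cmax hr
  have habs : Summable (fun t => |γ ^ t *
      ∑ s', stDist p π (fun x => if x = s then (1:ℝ) else 0) t s' * ∑ a, π s' a * c s' a|) :=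
    summable_abs_iff.mpr hsum
  have hgeom : Summable (fun t : ℕ => cmax * γ ^ t) :=
    (summable_geometric_of_lt_one hγ0 hγ1).mul_left cmax
  calc |Vval γ p π c s| ≤ ∑' t, |γ ^ t *
        ∑ s', stDist p π (fun x => if x = s then (1:ℝ) else 0) t s' * ∑ a, π s' a * c s' a| := by
        unfold Vval
        have h := norm_tsum_le_tsum_norm (f := fun t : ℕ => γ ^ t *
            ∑ s', stDist p π (fun x => if x = s then (1:ℝ) else 0) t s' * ∑ a, π s' a * c s' a)
          (by simp only [Real.norm_eq_abs]; exact habs)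
        simp only [Real.norm_eq_abs] at h; exact h
    _ ≤ ∑' t : ℕ, cmax * γ ^ t := by
        refine Summable.tsum_le_tsum (fun t => ?_) habs hgeom
        rw [abs_mul, abs_pow, abs_of_nonneg hγ0, mul_comm]
        exact mul_le_mul_of_nonneg_right
          (abs_pmf_dot _ _ (stDist_nonneg hp0 hπ0 (delta_nonneg s) t)
            (stDist_sum_one hp1 hπ1 (delta_sum_one s) t) hr)
          (pow_nonneg hγ0 t)
    _ = cmax / (1 - γ) := by
        rw [tsum_mul_left, tsum_geometric_of_lt_one hγ0 hγ1, div_eq_mul_inv]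

lemma Cval_delta {γ : ℝ} (c : S → A → ℝ) (s : S) :
    Cval γ p π c (fun x => if x = s then (1:ℝ) else 0) = Vval γ p π c s := by
  unfold Cval
  rw [Finset.sum_eq_single s]
  · simp
  · intro b _ hb; simp [hb]
  · intro h; exact absurd (Finset.mem_univ s) h

lemma Vval_bellman {γ : ℝ} (hγ0 : 0 ≤ γ) (hγ1 : γ < 1)
    (hp0 : ∀ s a s', 0 ≤ p s a s') (hp1 : ∀ s a, ∑ s', p s a s' = 1)
    (hπ0 : ∀ s a, 0 ≤ π s a) (hπ1 : ∀ s, ∑ a, π s a = 1)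
    (c : S → A → ℝ) (cmax : ℝ) (hc : ∀ s a, |c s a| ≤ cmax) (s : S) :
    Vval γ p π c s = (∑ a, π s a * c s a)
      + γ * ∑ s', (∑ a, π s a * p s a s') * Vval γ p π c s' := by
  set δ : S → ℝ := fun x => if x = s then (1:ℝ) else 0 with hδ
  set ρ₁ : S → ℝ := fun s' => ∑ s₀, ∑ a, δ s₀ * π s₀ a * p s₀ a s' with hρ₁def
  have hρ₁ : ∀ s', ρ₁ s' = ∑ a, π s a * p s a s' := by
    intro s'
    show (∑ s₀, ∑ a, δ s₀ * π s₀ a * p s₀ a s') = _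
    have : ∀ s₀, ∑ a, δ s₀ * π s₀ a * p s₀ a s'
        = if s₀ = s then ∑ a, π s₀ a * p s₀ a s' else 0 := by
      intro s₀
      by_cases h : s₀ = s <;> simp [hδ, h]
    rw [Finset.sum_congr rfl fun s₀ _ => this s₀]
    simp
  have hρ₁0 : ∀ s', 0 ≤ ρ₁ s' := by
    intro s'
    rw [hρ₁ s']
    exact Finset.sum_nonneg fun a _ => mul_nonneg (hπ0 s a) (hp0 s a s')
  have hρ₁1 : ∑ s', ρ₁ s' = 1 := by
    rw [Finset.sum_congr rfl fun s' _ => hρ₁ s', Finset.sum_comm]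
    calc ∑ a, ∑ s', π s a * p s a s' = ∑ a, π s a := by
          refine Finset.sum_congr rfl fun a _ => ?_
          rw [← Finset.mul_sum, hp1, mul_one]
      _ = 1 := hπ1 s
  have hr : ∀ s', |∑ a, π s' a * c s' a| ≤ cmax := fun s' =>
    abs_pmf_dot _ _ (hπ0 s') (hπ1 s') (hc s')
  have hsumδ : Summable (fun t => γ ^ t * ∑ s', stDist p π δ t s' * ∑ a, π s' a * c s' a) :=
    summable_dot hγ0 hγ1 hp0 hp1 hπ0 hπ1 (delta_nonneg s) (delta_sum_one s) _ cmax hr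
  have step1 : Vval γ p π c s
      = ∑' t : ℕ, γ ^ t * ∑ s', stDist p π δ t s' * ∑ a, π s' a * c s' a := rfl
  rw [step1, Summable.tsum_eq_zero_add hsumδ]
  have head : γ ^ 0 * ∑ s', stDist p π δ 0 s' * ∑ a, π s' a * c s' a
      = ∑ a, π s a * c s a := by
    simp only [pow_zero, one_mul]
    show ∑ s', δ s' * ∑ a, π s' a * c s' a = _
    rw [Finset.sum_eq_single s]
    · simp [hδ]
    · intro b _ hb; simp [hδ, hb]
    · intro h; exact absurd (Finset.mem_univ s) h
  have tail : ∑' t : ℕ, γ ^ (t+1) * ∑ s', stDist p π δ (t+1) s' * ∑ a, π s' a * c s' a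
      = γ * ∑ s', (∑ a, π s a * p s a s') * Vval γ p π c s' := by
    have h1 : ∀ t : ℕ, γ ^ (t+1) * ∑ s', stDist p π δ (t+1) s' * ∑ a, π s' a * c s' a
        = γ * (γ ^ t * ∑ s', stDist p π ρ₁ t s' * ∑ a, π s' a * c s' a) := by
      intro t
      rw [stDist_shift]
      ring
    rw [tsum_congr h1, tsum_mul_left]
    congr 1
    rw [← Cval_eq hγ0 hγ1 hp0 hp1 hπ0 hπ1 hρ₁0 hρ₁1 c cmax hc]
    unfold Cval
    exact Finset.sum_congr rfl fun s' _ => by rw [hρ₁ s']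
  rw [head, tail]

end aux3

section aux4
variable {S : Type} [Fintype S] [MetricSpace S]

lemma key_DW (V : S → ℝ) (L : ℝ)
    (hLip : ∀ x y, |V x - V y| ≤ L * dist x y)
    (q p : S → ℝ) (hq0 : ∀ s, 0 ≤ q s) (hq1 : ∑ s, q s = 1)
    (hp0 : ∀ s, 0 ≤ p s) (hp1 : ∑ s, p s = 1) :
    (∑ s, p s * V s) - ∑ s, q s * V s ≤ L * DW dist q p := by
  set W : Set ℝ := {w : ℝ | ∃ κ : S → S → ℝ, (∀ x y, 0 ≤ κ x y) ∧
    (∀ x, ∑ y, κ x y = q x) ∧ (∀ y, ∑ x, κ x y = p y) ∧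
    w = ∑ x, ∑ y, κ x y * dist x y} with hW
  have hDW : DW dist q p = sInf W := rfl
  -- the product coupling witnesses nonemptiness
  have hne : (∑ x, ∑ y, q x * p y * dist x y) ∈ W := by
    refine ⟨fun x y => q x * p y, fun x y => mul_nonneg (hq0 x) (hp0 y), ?_, ?_, rfl⟩
    · intro x; rw [← Finset.mul_sum, hp1, mul_one]
    · intro y; rw [← Finset.sum_mul, hq1, one_mul]
  have hNE : W.Nonempty := ⟨_, hne⟩
  -- every element of W is nonneg
  have hpos : ∀ w ∈ W, 0 ≤ w := by
    rintro w ⟨κ, hκ0, -, -, rfl⟩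
    exact Finset.sum_nonneg fun x _ => Finset.sum_nonneg fun y _ =>
      mul_nonneg (hκ0 x y) dist_nonneg
  have hbdd : BddBelow W := ⟨0, fun w hw => hpos w hw⟩
  -- the key bound for each coupling
  have hkey : ∀ w ∈ W, (∑ s, p s * V s) - ∑ s, q s * V s ≤ L * w := by
    rintro w ⟨κ, hκ0, hκq, hκp, rfl⟩
    have h1 : ∑ s, p s * V s = ∑ x, ∑ y, κ x y * V y := by
      rw [Finset.sum_comm]
      refine Finset.sum_congr rfl fun y _ => ?_
      rw [← hκp y, Finset.sum_mul]
    have h2 : ∑ s, q s * V s = ∑ x, ∑ y, κ x y * V x := by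
      refine Finset.sum_congr rfl fun x _ => ?_
      rw [← hκq x, Finset.sum_mul]
    rw [h1, h2, ← Finset.sum_sub_distrib, Finset.mul_sum]
    refine Finset.sum_le_sum fun x _ => ?_
    rw [← Finset.sum_sub_distrib, Finset.mul_sum]
    refine Finset.sum_le_sum fun y _ => ?_
    have : κ x y * V y - κ x y * V x = κ x y * (V y - V x) := by ring
    rw [this, ← mul_assoc, mul_comm L (κ x y), mul_assoc]
    refine mul_le_mul_of_nonneg_left ?_ (hκ0 x y)
    calc V y - V x ≤ |V y - V x| := le_abs_self _
      _ = |V x - V y| := abs_sub_comm _ _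
      _ ≤ L * dist x y := hLip x y
  rcases lt_trichotomy L 0 with hL | hL | hL
  · -- degenerate: all distances are zero
    have hd0 : ∀ x y : S, dist x y = 0 := by
      intro x y
      by_contra h
      have hdpos : 0 < dist x y := lt_of_le_of_ne dist_nonneg (Ne.symm h)
      have := hLip x y
      nlinarith [abs_nonneg (V x - V y)]
    have hW0 : ∀ w ∈ W, w = 0 := by
      rintro w ⟨κ, -, -, -, rfl⟩
      simp [hd0]
    have hsInf : sInf W = 0 := le_antisymm
      (by rw [← hW0 _ hne]; exact csInf_le hbdd hne)
      (le_csInf hNE fun w hw => (hW0 w hw).ge)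
    rw [hDW, hsInf, mul_zero]
    have := hkey _ hne
    rw [hW0 _ hne] at this
    simpa using this
  · subst hL
    rw [zero_mul]
    have := hkey _ hne
    simpa using this
  · rw [hDW]
    rw [← div_le_iff₀' hL]
    exact le_csInf hNE fun w hw => (div_le_iff₀' hL).mpr (hkey w hw)
end aux4

section aux5
variable {S A : Type} [Fintype S] [Fintype A] [DecidableEq S] [MetricSpace S]

lemma sim_bound (γ : ℝ) (hγ0 : 0 ≤ γ) (hγ1 : γ < 1)
    (pstar q : S → A → S → ℝ) (π : S → A → ℝ) (ρ : S → ℝ)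
    (c : S → A → ℝ) (cmax : ℝ) (L : ℝ)
    (hp0 : ∀ s a s', 0 ≤ pstar s a s') (hp1 : ∀ s a, ∑ s', pstar s a s' = 1)
    (hq0 : ∀ s a s', 0 ≤ q s a s') (hq1 : ∀ s a, ∑ s', q s a s' = 1)
    (hπ0 : ∀ s a, 0 ≤ π s a) (hπ1 : ∀ s, ∑ a, π s a = 1)
    (hρ0 : ∀ s, 0 ≤ ρ s) (hρ1 : ∑ s, ρ s = 1)
    (hc : ∀ s a, |c s a| ≤ cmax)
    (hLipV : ∀ s s' : S, |Vval γ pstar π c s - Vval γ pstar π c s'| ≤ L * dist s s') :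
    Cval γ pstar π c ρ ≤ Cval γ q π c ρ +
      ∑ s, ∑ a, occ γ q π ρ s a *
        (γ * L / (1 - γ) * DW dist (q s a) (pstar s a)) := by
  have h1γ : (0:ℝ) < 1 - γ := by linarith
  set V : S → ℝ := Vval γ pstar π c with hV
  set r : S → ℝ := fun s => ∑ a, π s a * c s a with hr
  set d : ℕ → S → ℝ := stDist q π ρ with hd
  set f : ℕ → ℝ := fun t => γ ^ t * ∑ s, d t s * V s with hf
  set R : ℕ → ℝ := fun t => γ ^ t * ∑ s, d t s * r s with hR
  set K : S → A → ℝ := fun s a => ∑ s', (q s a s' - pstar s a s') * V s' with hK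
  set E : ℕ → ℝ := fun t => γ ^ (t+1) * ∑ s, d t s * ∑ a, π s a * K s a with hE
  set B : S → A → ℝ := fun s a => L * DW dist (q s a) (pstar s a) with hB
  set T : S → ℝ := fun s => ∑' t : ℕ, γ ^ t * d t s with hT
  -- basic facts
  have hrb : ∀ s, |r s| ≤ cmax := fun s => abs_pmf_dot _ _ (hπ0 s) (hπ1 s) (hc s)
  have hVb : ∀ s, |V s| ≤ cmax / (1 - γ) := fun s =>
    abs_Vval_le hγ0 hγ1 hp0 hp1 hπ0 hπ1 c cmax hc s
  have hd0 : ∀ t s, 0 ≤ d t s := stDist_nonneg hq0 hπ0 hρ0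
  have hd1 : ∀ t, ∑ s, d t s = 1 := stDist_sum_one hq1 hπ1 hρ1
  have hBellman : ∀ s, V s = r s + γ * ∑ s', (∑ a, π s a * pstar s a s') * V s' :=
    fun s => Vval_bellman hγ0 hγ1 hp0 hp1 hπ0 hπ1 c cmax hc s
  have hKb : ∀ s a, |K s a| ≤ 2 * (cmax / (1 - γ)) := by
    intro s a
    have h1 : K s a = (∑ s', q s a s' * V s') - ∑ s', pstar s a s' * V s' := by
      rw [hK, ← Finset.sum_sub_distrib]
      exact Finset.sum_congr rfl fun s' _ => by ring
    rw [h1]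
    have h2 := abs_pmf_dot _ _ (hq0 s a) (hq1 s a) hVb
    have h3 := abs_pmf_dot _ _ (hp0 s a) (hp1 s a) hVb
    calc |(∑ s', q s a s' * V s') - ∑ s', pstar s a s' * V s'|
        ≤ |∑ s', q s a s' * V s'| + |∑ s', pstar s a s' * V s'| := abs_sub _ _
      _ ≤ 2 * (cmax / (1 - γ)) := by linarith
  -- Claim A : telescoping identity
  have hA : ∀ t, f t - f (t+1) = R t - E t := by
    intro t
    have A1 : f t = R t + γ ^ (t+1) * ∑ s, ∑ a, ∑ s', d t s * π s a * pstar s a s' * V s' := by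
      rw [hf, hR]
      calc γ ^ t * ∑ s, d t s * V s
          = γ ^ t * ∑ s, (d t s * r s + γ * ∑ a, ∑ s', d t s * π s a * pstar s a s' * V s') := by
            refine congrArg _ (Finset.sum_congr rfl fun s _ => ?_)
            rw [hBellman s]
            have h4 : ∑ a, ∑ s', d t s * π s a * pstar s a s' * V s'
                = d t s * ∑ s', (∑ a, π s a * pstar s a s') * V s' := by
              rw [Finset.mul_sum, Finset.sum_comm]
              refine Finset.sum_congr rfl fun s' _ => ?_
              rw [Finset.sum_mul, Finset.mul_sum]
              exact Finset.sum_congr rfl fun a _ => by ring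
            rw [h4]; ring
        _ = R t + γ ^ (t+1) * ∑ s, ∑ a, ∑ s', d t s * π s a * pstar s a s' * V s' := by
            rw [Finset.sum_add_distrib, mul_add]
            congr 1
            rw [← Finset.mul_sum]
            ring
    have A2 : f (t+1) = γ ^ (t+1) * ∑ s, ∑ a, ∑ s', d t s * π s a * q s a s' * V s' := by
      show γ ^ (t+1) * ∑ s', d (t+1) s' * V s' = _
      congr 1
      calc ∑ s', d (t+1) s' * V s'
          = ∑ s', ∑ s, ∑ a, d t s * π s a * q s a s' * V s' := by
            refine Finset.sum_congr rfl fun s' _ => ?_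
            show (∑ s, ∑ a, d t s * π s a * q s a s') * V s' = _
            rw [Finset.sum_mul]
            exact Finset.sum_congr rfl fun s _ => Finset.sum_mul _ _ _
        _ = ∑ s, ∑ s', ∑ a, d t s * π s a * q s a s' * V s' := Finset.sum_comm
        _ = ∑ s, ∑ a, ∑ s', d t s * π s a * q s a s' * V s' :=
            Finset.sum_congr rfl fun s _ => Finset.sum_comm
    have A3 : E t = γ ^ (t+1) * ((∑ s, ∑ a, ∑ s', d t s * π s a * q s a s' * V s')
        - ∑ s, ∑ a, ∑ s', d t s * π s a * pstar s a s' * V s') := by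
      show γ ^ (t+1) * ∑ s, d t s * ∑ a, π s a * K s a = _
      congr 1
      rw [← Finset.sum_sub_distrib]
      refine Finset.sum_congr rfl fun s _ => ?_
      rw [← Finset.sum_sub_distrib, Finset.mul_sum]
      refine Finset.sum_congr rfl fun a _ => ?_
      rw [hK, ← Finset.sum_sub_distrib, Finset.mul_sum, Finset.mul_sum]
      refine Finset.sum_congr rfl fun s' _ => by ring
    rw [A1, A2, A3]; ring
  -- summabilities
  have hRsum : Summable R :=
    summable_dot hγ0 hγ1 hq0 hq1 hπ0 hπ1 hρ0 hρ1 r cmax hrb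
  have hgE : ∀ t, |∑ s, d t s * ∑ a, π s a * K s a| ≤ 2 * (cmax / (1 - γ)) := by
    intro t
    exact abs_pmf_dot _ _ (hd0 t) (hd1 t) fun s =>
      abs_pmf_dot _ _ (hπ0 s) (hπ1 s) (hKb s)
  have hEsum : Summable E := by
    have h := (summable_geom_mul hγ0 hγ1 _ _ hgE).mul_left γ
    refine h.congr fun t => ?_
    show γ * (γ ^ t * ∑ s, d t s * ∑ a, π s a * K s a)
      = γ ^ (t+1) * ∑ s, d t s * ∑ a, π s a * K s a
    ring
  have hfE : Summable (fun t => f t - f (t+1)) :=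
    (hRsum.sub hEsum).congr fun t => (hA t).symm
  -- limit of f
  have hf0 : Filter.Tendsto f Filter.atTop (nhds 0) := by
    have hg : Filter.Tendsto (fun t : ℕ => cmax / (1 - γ) * γ ^ t) Filter.atTop (nhds 0) := by
      simpa using (tendsto_pow_atTop_nhds_zero_of_lt_one hγ0 hγ1).const_mul (cmax / (1-γ))
    refine squeeze_zero_norm (fun t => ?_) hg
    show ‖γ ^ t * ∑ s, d t s * V s‖ ≤ cmax / (1 - γ) * γ ^ t
    rw [Real.norm_eq_abs, abs_mul, abs_pow, abs_of_nonneg hγ0, mul_comm]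
    exact mul_le_mul_of_nonneg_right (abs_pmf_dot _ _ (hd0 t) (hd1 t) hVb)
      (pow_nonneg hγ0 t)
  -- telescoping sum
  have htel : ∑' t, (f t - f (t+1)) = f 0 := by
    have h1 := hfE.hasSum.tendsto_sum_nat
    have h2 : (fun n => ∑ i ∈ Finset.range n, (f i - f (i+1))) = fun n => f 0 - f n :=
      funext fun n => Finset.sum_range_sub' f n
    rw [h2] at h1
    have h3 : Filter.Tendsto (fun n => f 0 - f n) Filter.atTop (nhds (f 0 - 0)) :=
      tendsto_const_nhds.sub hf0
    rw [sub_zero] at h3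
    exact tendsto_nhds_unique h1 h3
  have hCstar : Cval γ pstar π c ρ = f 0 := by
    rw [hf]
    simp only [pow_zero, one_mul]
    rfl
  have hCq : Cval γ q π c ρ = ∑' t, R t :=
    Cval_eq hγ0 hγ1 hq0 hq1 hπ0 hπ1 hρ0 hρ1 c cmax hc
  have hmain : Cval γ pstar π c ρ = Cval γ q π c ρ - ∑' t, E t := by
    rw [hCstar, ← htel, tsum_congr hA, Summable.tsum_sub hRsum hEsum, hCq]
  -- bound on the error term
  have hKB : ∀ s a, - K s a ≤ B s a := by
    intro s a
    have h1 : - K s a = (∑ s', pstar s a s' * V s') - ∑ s', q s a s' * V s' := by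
      rw [hK, ← Finset.sum_sub_distrib]
      rw [neg_eq_iff_eq_neg, ← Finset.sum_neg_distrib]
      exact Finset.sum_congr rfl fun s' _ => by ring
    rw [h1, hB]
    exact key_DW V L (fun x y => hLipV x y) (q s a) (pstar s a)
      (hq0 s a) (hq1 s a) (hp0 s a) (hp1 s a)
  -- B is bounded
  obtain ⟨MB, hMB⟩ : ∃ MB, ∀ s a, |B s a| ≤ MB := by
    refine ⟨∑ s, ∑ a, |B s a|, fun s a => ?_⟩
    calc |B s a| ≤ ∑ a, |B s a| :=
          Finset.single_le_sum (f := fun a' => |B s a'|) (fun a' _ => abs_nonneg _)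
            (Finset.mem_univ a)
      _ ≤ ∑ s, ∑ a, |B s a| :=
          Finset.single_le_sum (f := fun s => ∑ a, |B s a|)
            (fun s _ => Finset.sum_nonneg fun a _ => abs_nonneg _) (Finset.mem_univ s)
  set G : ℕ → ℝ := fun t => γ ^ (t+1) * ∑ s, d t s * ∑ a, π s a * B s a with hG
  have hGsum : Summable G := by
    have h := (summable_geom_mul hγ0 hγ1 (fun t => ∑ s, d t s * ∑ a, π s a * B s a) MB
      (fun t => abs_pmf_dot _ _ (hd0 t) (hd1 t) fun s =>
        abs_pmf_dot _ _ (hπ0 s) (hπ1 s) (hMB s))).mul_left γ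
    refine h.congr fun t => ?_
    show γ * (γ ^ t * ∑ s, d t s * ∑ a, π s a * B s a)
      = γ ^ (t+1) * ∑ s, d t s * ∑ a, π s a * B s a
    ring
  have hEG : ∀ t, - E t ≤ G t := by
    intro t
    show -(γ ^ (t+1) * ∑ s, d t s * ∑ a, π s a * K s a)
      ≤ γ ^ (t+1) * ∑ s, d t s * ∑ a, π s a * B s a
    rw [← mul_neg, ← Finset.sum_neg_distrib]
    refine mul_le_mul_of_nonneg_left (Finset.sum_le_sum fun s _ => ?_) (pow_nonneg hγ0 _)
    rw [← mul_neg, ← Finset.sum_neg_distrib]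
    refine mul_le_mul_of_nonneg_left (Finset.sum_le_sum fun a _ => ?_) (hd0 t s)
    rw [← mul_neg]
    exact mul_le_mul_of_nonneg_left (hKB s a) (hπ0 s a)
  -- d is at most one
  have hdle1 : ∀ t s, |d t s| ≤ 1 := by
    intro t s
    rw [abs_of_nonneg (hd0 t s), ← hd1 t]
    exact Finset.single_le_sum (f := fun s' => d t s') (fun s' _ => hd0 t s')
      (Finset.mem_univ s)
  -- compute the value of ∑' G
  have hGt : ∀ t, G t = ∑ s, (∑ a, γ * π s a * B s a) * (γ ^ t * d t s) := by
    intro t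
    show γ ^ (t+1) * ∑ s, d t s * ∑ a, π s a * B s a = _
    rw [Finset.mul_sum]
    refine Finset.sum_congr rfl fun s _ => ?_
    rw [Finset.sum_mul, Finset.mul_sum, Finset.mul_sum]
    exact Finset.sum_congr rfl fun a _ => by ring
  have hsumg : ∀ s : S, Summable (fun t => (∑ a, γ * π s a * B s a) * (γ ^ t * d t s)) :=
    fun s => (summable_geom_mul hγ0 hγ1 (fun t => d t s) 1 (fun t => hdle1 t s)).mul_left _
  have hGval : ∑' t, G t = ∑ s, ∑ a, occ γ q π ρ s a *
      (γ * L / (1 - γ) * DW dist (q s a) (pstar s a)) := by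
    rw [tsum_congr hGt, Summable.tsum_finsetSum (fun s _ => hsumg s)]
    refine Finset.sum_congr rfl fun s _ => ?_
    rw [tsum_mul_left]
    have hTs : (∑' t, γ ^ t * d t s) = T s := rfl
    rw [hTs, Finset.sum_mul]
    refine Finset.sum_congr rfl fun a _ => ?_
    show γ * π s a * B s a * T s
      = (1 - γ) * π s a * T s * (γ * L / (1 - γ) * DW dist (q s a) (pstar s a))
    rw [hB]
    field_simp
  -- conclude
  have hfinal : - ∑' t, E t ≤ ∑ s, ∑ a, occ γ q π ρ s a *
      (γ * L / (1 - γ) * DW dist (q s a) (pstar s a)) := by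
    rw [← hGval, ← tsum_neg]
    exact Summable.tsum_le_tsum hEG hEsum.neg hGsum
  rw [hmain]
  linarith
end aux5

/-- Pessimistic upper bound (Lemma 1): the real cost is bounded by the average
simulated cost plus the occupancy-weighted worst-case Wasserstein discrepancy. -/
theorem pessimistic_upper_bound {S A Ξ : Type} [Fintype S] [Fintype A]
    [Fintype Ξ] [DecidableEq S] [MetricSpace S]
    (γ : ℝ) (hγ0 : 0 ≤ γ) (hγ1 : γ < 1)
    (pstar : S → A → S → ℝ) (psim : Ξ → S → A → S → ℝ)
    (μ : Ξ → ℝ) (hμ0 : ∀ ξ, 0 ≤ μ ξ) (hμ1 : ∑ ξ, μ ξ = 1)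
    (π : S → A → ℝ) (ρ : S → ℝ)
    (c : S → A → ℝ) (cmax : ℝ) (L : ℝ)
    (hp0 : ∀ s a s', 0 ≤ pstar s a s') (hp1 : ∀ s a, ∑ s', pstar s a s' = 1)
    (hq0 : ∀ ξ s a s', 0 ≤ psim ξ s a s')
    (hq1 : ∀ ξ s a, ∑ s', psim ξ s a s' = 1)
    (hπ0 : ∀ s a, 0 ≤ π s a) (hπ1 : ∀ s, ∑ a, π s a = 1)
    (hρ0 : ∀ s, 0 ≤ ρ s) (hρ1 : ∑ s, ρ s = 1)
    (hc0 : ∀ s a, 0 ≤ c s a) (hc1 : ∀ s a, c s a ≤ cmax)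
    (hLip : ∀ π' : S → A → ℝ, (∀ s a, 0 ≤ π' s a) → (∀ s, ∑ a, π' s a = 1) →
      ∀ s s' : S,
        |Vval γ pstar π' c s - Vval γ pstar π' c s'| ≤ L * dist s s') :
    Cval γ pstar π c ρ ≤
      (∑ ξ, μ ξ * Cval γ (psim ξ) π c ρ) +
        ∑ ξ, μ ξ * ∑ s, ∑ a, occ γ (psim ξ) π ρ s a *
          (γ * L / (1 - γ) * DW dist (psim ξ s a) (pstar s a)) := by
  rcases isEmpty_or_nonempty S with hS | hS
  · simp [Cval]
  rcases isEmpty_or_nonempty A with hA | hA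
  · exact absurd (hπ1 (Classical.arbitrary S)) (by simp)
  have hc : ∀ s a, |c s a| ≤ cmax := fun s a => by
    rw [abs_of_nonneg (hc0 s a)]; exact hc1 s a
  have hbd : ∀ ξ, Cval γ pstar π c ρ ≤ Cval γ (psim ξ) π c ρ +
      ∑ s, ∑ a, occ γ (psim ξ) π ρ s a *
        (γ * L / (1 - γ) * DW dist (psim ξ s a) (pstar s a)) :=
    fun ξ => sim_bound γ hγ0 hγ1 pstar (psim ξ) π ρ c cmax L hp0 hp1 (hq0 ξ) (hq1 ξ)
      hπ0 hπ1 hρ0 hρ1 hc (hLip π hπ0 hπ1)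
  calc Cval γ pstar π c ρ = ∑ ξ, μ ξ * Cval γ pstar π c ρ := by
        rw [← Finset.sum_mul, hμ1, one_mul]
    _ ≤ ∑ ξ, μ ξ * (Cval γ (psim ξ) π c ρ + ∑ s, ∑ a, occ γ (psim ξ) π ρ s a *
          (γ * L / (1 - γ) * DW dist (psim ξ s a) (pstar s a))) :=
        Finset.sum_le_sum fun ξ _ => mul_le_mul_of_nonneg_left (hbd ξ) (hμ0 ξ)
    _ = _ := by
        simp only [mul_add]
        exact Finset.sum_add_distrib
end

section
/- Let 0 < ε ≤ 1/4 and γ ∈ (0,1). Consider a three-state MDP with states s₀ (initial), s₁, s₂ (absorbing), two actions a₁, a₂; cost c(s₁,·)=1 and c(s₀,·)=c(s₂,·)=0; reward r(s₁,·)=1 and 0 elsewhere. The simulated kernel has p̂(s₁|s₀,a) = 1/2 + ε·1[a=a₁], and the real kernel has p*(s₁|s₀,a) = 1/2 + ε·(1 + 1[a=a₁]); absorbing states self-loop with probability 1. Then: (i) the L1-Wasserstein distance (with states embedded as 0, 1, 2 in ℝ) between p̂(·|s,a) and p*(·|s,a) is at most ε for all (s,a); (ii) with budget d = (γ/(1−γ))(1/2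 + ε), the reward-maximizing policy chooses a₁ at s₀, satisfies the simulated constraint C_{p̂}(π) = (γ/(1−γ))(1/2 + ε) ≤ d, but violates the real constraint: C_{p*}(π) = (γ/(1−γ))(1/2 + 2ε) > d. -/
open Finset

/-- Simulated kernel of the three-state failure-mode example. -/
noncomputable def phat (ε : ℝ) : Fin 3 → Fin 2 → Fin 3 → ℝ := fun s a s' =>
  if s = 0 then
    (if s' = 1 then 1 / 2 + (if a = 0 then ε else 0)
     else if s' = 2 then 1 / 2 - (if a = 0 then ε else 0) else 0)
  else if s' = s then 1 else 0

/-- Real kernel of the three-state failure-mode example. -/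
noncomputable def preal (ε : ℝ) : Fin 3 → Fin 2 → Fin 3 → ℝ := fun s a s' =>
  if s = 0 then
    (if s' = 1 then 1 / 2 + ε * (1 + (if a = 0 then 1 else 0))
     else if s' = 2 then 1 / 2 - ε * (1 + (if a = 0 then 1 else 0)) else 0)
  else if s' = s then 1 else 0

/-- Cost (and reward): 1 on state `s₁`, 0 elsewhere. -/
noncomputable def exCost : Fin 3 → Fin 2 → ℝ := fun s _ => if s = 1 then 1 else 0

/-- States embedded as the reals 0, 1, 2. -/
noncomputable def exDist : Fin 3 → Fin 3 → ℝ := fun x y =>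
  |((x : ℕ) : ℝ) - ((y : ℕ) : ℝ)|

/-- Initial distribution: point mass at `s₀`. -/
noncomputable def exInit : Fin 3 → ℝ := fun s => if s = 0 then 1 else 0

/-- The policy that always plays `a₁`. -/
noncomputable def polA1 : Fin 3 → Fin 2 → ℝ := fun _ a => if a = 0 then 1 else 0

lemma DW_le_of_mem (w : ℝ) (d : Fin 3 → Fin 3 → ℝ) (hd : ∀ x y, 0 ≤ d x y)
    (μ ν : Fin 3 → ℝ) (κ : Fin 3 → Fin 3 → ℝ) (h0 : ∀ x y, 0 ≤ κ x y)
    (h1 : ∀ x, ∑ y, κ x y = μ x) (h2 : ∀ y, ∑ x, κ x y = ν y)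
    (h3 : ∑ x, ∑ y, κ x y * d x y ≤ w) :
    DW d μ ν ≤ w := by
  refine le_trans (csInf_le ⟨0, ?_⟩ ⟨κ, h0, h1, h2, rfl⟩) h3
  rintro z ⟨κ', hκ0, -, -, rfl⟩
  exact Finset.sum_nonneg fun x _ => Finset.sum_nonneg fun y _ =>
    mul_nonneg (hκ0 x y) (hd x y)

lemma stDist_eq (p : Fin 3 → Fin 2 → Fin 3 → ℝ)
    (hp0 : ∀ a, p 0 a 0 = 0)
    (hp1 : ∀ a s', p 1 a s' = if s' = 1 then 1 else 0)
    (hp2 : ∀ a s', p 2 a s' = if s' = 2 then 1 else 0)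
    (π : Fin 3 → Fin 2 → ℝ) (hπ : ∀ s, ∑ a, π s a = 1) :
    ∀ t, stDist p π exInit (t + 1) = fun s' =>
      if s' = 0 then 0 else if s' = 1 then ∑ a, π 0 a * p 0 a 1
      else ∑ a, π 0 a * p 0 a 2 := by
  intro t
  induction t with
  | zero =>
    funext s'
    show (∑ s, ∑ a, exInit s * π s a * p s a s') = _
    fin_cases s' <;> simp [Fin.sum_univ_three, exInit, hp0]
  | succ t ih =>
    funext s'
    show (∑ s, ∑ a, stDist p π exInit (t + 1) s * π s a * p s a s') = _
    rw [ih]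
    have e1 : π 1 0 + π 1 1 = 1 := by have := hπ 1; rwa [Fin.sum_univ_two] at this
    have e2 : π 2 0 + π 2 1 = 1 := by have := hπ 2; rwa [Fin.sum_univ_two] at this
    fin_cases s'
    · simp [Fin.sum_univ_three, Fin.sum_univ_two, hp1, hp2]
    · simp [Fin.sum_univ_three, Fin.sum_univ_two, hp1, hp2]
      linear_combination (π 0 0 * p 0 0 1 + π 0 1 * p 0 1 1) * e1
    · simp [Fin.sum_univ_three, Fin.sum_univ_two, hp1, hp2]
      linear_combination (π 0 0 * p 0 0 2 + π 0 1 * p 0 1 2) * e2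

lemma Cval_eq_s13 (p : Fin 3 → Fin 2 → Fin 3 → ℝ)
    (hp0 : ∀ a, p 0 a 0 = 0)
    (hp1 : ∀ a s', p 1 a s' = if s' = 1 then 1 else 0)
    (hp2 : ∀ a s', p 2 a s' = if s' = 2 then 1 else 0)
    (π : Fin 3 → Fin 2 → ℝ) (hπ : ∀ s, ∑ a, π s a = 1)
    (γ : ℝ) (hγ0 : 0 ≤ γ) (hγ1 : γ < 1) :
    Cval γ p π exCost exInit = γ / (1 - γ) * ∑ a, π 0 a * p 0 a 1 := by
  set q : ℝ := ∑ a, π 0 a * p 0 a 1 with hq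
  have hst := stDist_eq p hp0 hp1 hp2 π hπ
  have hinner : ∀ t, (∑ s', stDist p π exInit t s' * ∑ a, π s' a * exCost s' a)
      = if t = 0 then 0 else q := by
    intro t
    cases t with
    | zero =>
      show (∑ s', exInit s' * ∑ a, π s' a * exCost s' a) = _
      simp [Fin.sum_univ_three, exInit, exCost]
    | succ t =>
      rw [hst t]
      have e1 : π 1 0 + π 1 1 = 1 := by
        have := hπ 1; rwa [Fin.sum_univ_two] at this
      simp [Fin.sum_univ_three, Fin.sum_univ_two, exCost]
      rw [hq, Fin.sum_univ_two]
      linear_combination (π 0 0 * p 0 0 1 + π 0 1 * p 0 1 1) * e1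
  have hsummable : Summable (fun t : ℕ => q * γ ^ t) :=
    (summable_geometric_of_lt_one hγ0 hγ1).mul_left q
  have hV : Vval γ p π exCost 0 = γ / (1 - γ) * q := by
    unfold Vval
    have key : ∀ t : ℕ, γ ^ t *
        (∑ s', stDist p π (fun x => if x = (0 : Fin 3) then (1 : ℝ) else 0) t s' *
          ∑ a, π s' a * exCost s' a)
        = q * γ ^ t - (if t = 0 then q else 0) := by
      intro t
      rw [show (fun x : Fin 3 => if x = 0 then (1 : ℝ) else 0) = exInit from rfl,
        hinner t]
      cases t with
      | zero => simp
      | succ t => simp [mul_comm]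
    rw [tsum_congr key, Summable.tsum_sub hsummable ((hasSum_ite_eq 0 q).summable),
      tsum_mul_left, tsum_geometric_of_lt_one hγ0 hγ1, tsum_ite_eq]
    have h1γ : (1 : ℝ) - γ ≠ 0 := by linarith
    field_simp
    ring
  unfold Cval
  simp [Fin.sum_univ_three, exInit, hV]

/-- Failure mode of domain randomization: the kernels are ε-close in
Wasserstein distance, the reward-maximizing policy (always `a₁`) satisfies the
simulated constraint with budget `d = γ/(1−γ)·(1/2+ε)`, yet violates the real
constraint. -/
theorem domain_randomization_unsafe
    (ε : ℝ) (hε0 : 0 < ε) (hε : ε ≤ 1 / 4)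
    (γ : ℝ) (hγ0 : 0 < γ) (hγ1 : γ < 1) :
    (∀ (s : Fin 3) (a : Fin 2),
        DW exDist (phat ε s a) (preal ε s a) ≤ ε) ∧
    (∀ π : Fin 3 → Fin 2 → ℝ, (∀ s a, 0 ≤ π s a) → (∀ s, ∑ a, π s a = 1) →
        Cval γ (phat ε) π exCost exInit ≤ Cval γ (phat ε) polA1 exCost exInit) ∧
    Cval γ (phat ε) polA1 exCost exInit = γ / (1 - γ) * (1 / 2 + ε) ∧
    Cval γ (phat ε) polA1 exCost exInit ≤ γ / (1 - γ) * (1 / 2 + ε) ∧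
    Cval γ (preal ε) polA1 exCost exInit = γ / (1 - γ) * (1 / 2 + 2 * ε) ∧
    Cval γ (preal ε) polA1 exCost exInit > γ / (1 - γ) * (1 / 2 + ε) := by
  have h1γ : (0 : ℝ) < 1 - γ := by linarith
  have hfrac : 0 < γ / (1 - γ) := div_pos hγ0 h1γ
  have hd : ∀ x y : Fin 3, 0 ≤ exDist x y := fun x y => abs_nonneg _
  -- kernel structure hypotheses
  have hp0h : ∀ a, phat ε 0 a 0 = 0 := by intro a; simp [phat]
  have hp1h : ∀ a s', phat ε 1 a s' = if s' = 1 then 1 else 0 := by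
    intro a s'; simp [phat]
  have hp2h : ∀ a s', phat ε 2 a s' = if s' = 2 then 1 else 0 := by
    intro a s'; simp [phat]
  have hp0r : ∀ a, preal ε 0 a 0 = 0 := by intro a; simp [preal]
  have hp1r : ∀ a s', preal ε 1 a s' = if s' = 1 then 1 else 0 := by
    intro a s'; simp [preal]
  have hp2r : ∀ a s', preal ε 2 a s' = if s' = 2 then 1 else 0 := by
    intro a s'; simp [preal]
  have hpolnn : ∀ s a, 0 ≤ polA1 s a := by
    intro s a; simp only [polA1]; split <;> norm_num
  have hpol1 : ∀ s : Fin 3, ∑ a, polA1 s a = 1 := by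
    intro s; simp [polA1, Fin.sum_univ_two]
  -- Cval formulas
  have hCphat : ∀ π : Fin 3 → Fin 2 → ℝ, (∀ s, ∑ a, π s a = 1) →
      Cval γ (phat ε) π exCost exInit = γ / (1 - γ) * (1 / 2 + ε * π 0 0) := by
    intro π hπ1
    rw [Cval_eq_s13 _ hp0h hp1h hp2h π hπ1 γ hγ0.le hγ1]
    have h01 : π 0 1 = 1 - π 0 0 := by
      have := hπ1 0; rw [Fin.sum_univ_two] at this; linarith
    have k0 : phat ε 0 0 1 = 1 / 2 + ε := by norm_num [phat]
    have k1 : phat ε 0 1 1 = 1 / 2 := by norm_num [phat]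
    rw [Fin.sum_univ_two, k0, k1, h01]; ring
  have hChat : Cval γ (phat ε) polA1 exCost exInit = γ / (1 - γ) * (1 / 2 + ε) := by
    rw [hCphat polA1 hpol1]; simp [polA1]
  have hCreal : Cval γ (preal ε) polA1 exCost exInit
      = γ / (1 - γ) * (1 / 2 + 2 * ε) := by
    rw [Cval_eq_s13 _ hp0r hp1r hp2r polA1 hpol1 γ hγ0.le hγ1]
    have k0 : preal ε 0 0 1 = 1 / 2 + 2 * ε := by norm_num [preal]; ring
    rw [Fin.sum_univ_two, k0]
    simp [polA1]
  refine ⟨?_, ?_, hChat, hChat.le, hCreal, ?_⟩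
  · -- Wasserstein bound
    intro s a
    fin_cases s
    · fin_cases a
      · refine DW_le_of_mem ε exDist hd _ _
          (fun x y => if x = 1 ∧ y = 1 then 1 / 2 + ε
            else if x = 2 ∧ y = 1 then ε
            else if x = 2 ∧ y = 2 then 1 / 2 - 2 * ε else 0) ?_ ?_ ?_ ?_
        · intro x y; fin_cases x <;> fin_cases y <;> simp <;> linarith
        · intro x; fin_cases x <;>
            · simp [Fin.sum_univ_three, phat]; try ring
        · intro y; fin_cases y <;>
            · simp [Fin.sum_univ_three, preal]; try ring
        · simp [Fin.sum_univ_three, exDist]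
          norm_num
      · refine DW_le_of_mem ε exDist hd _ _
          (fun x y => if x = 1 ∧ y = 1 then 1 / 2
            else if x = 2 ∧ y = 1 then ε
            else if x = 2 ∧ y = 2 then 1 / 2 - ε else 0) ?_ ?_ ?_ ?_
        · intro x y; fin_cases x <;> fin_cases y <;> simp <;> linarith
        · intro x; fin_cases x <;>
            · simp [Fin.sum_univ_three, phat]; try ring
        · intro y; fin_cases y <;>
            · simp [Fin.sum_univ_three, preal]; try ring
        · simp [Fin.sum_univ_three, exDist]
          norm_num
    · refine DW_le_of_mem ε exDist hd _ _
        (fun x y => if x = 1 ∧ y = 1 then 1 else 0) ?_ ?_ ?_ ?_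
      · intro x y; fin_cases x <;> fin_cases y <;> simp
      · intro x; fin_cases x <;> simp [Fin.sum_univ_three, phat]
      · intro y; fin_cases y <;> simp [Fin.sum_univ_three, preal]
      · simp [Fin.sum_univ_three, exDist]; linarith
    · refine DW_le_of_mem ε exDist hd _ _
        (fun x y => if x = 2 ∧ y = 2 then 1 else 0) ?_ ?_ ?_ ?_
      · intro x y; fin_cases x <;> fin_cases y <;> simp
      · intro x; fin_cases x <;> simp [Fin.sum_univ_three, phat]
      · intro y; fin_cases y <;> simp [Fin.sum_univ_three, preal]
      · simp [Fin.sum_univ_three, exDist]; linarith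
  · -- optimality of polA1
    intro π hπ0 hπ1
    rw [hCphat π hπ1, hChat]
    have hle : π 0 0 ≤ 1 := by
      have := hπ1 0; rw [Fin.sum_univ_two] at this
      have := hπ0 0 1; linarith
    have : ε * π 0 0 ≤ ε := by nlinarith
    nlinarith
  · rw [hCreal]; nlinarith
end
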